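/- (Simulation of HT up to a Pauli operator by state transfer with observables Z, Z⊗X, (X-Y)/√2) Let |y_s⟩ = (|0⟩ + (-1)^s·e^{-iπ/4}|1⟩)/√2. Work in ℂ²⊗ℂ² with the data qubit a as the first factor and the ancilla qubit b as the second, the ancilla being prepared in |s₁⟩ by a Z-measurement with outcome s₁. For all s₁, s₂, s₃ ∈ {0,1} and every φ ∈ ℂ²: (|y_{s₃}⟩⟨y_{s₃}| ⊗ I) · ((I⊗I + (-1)^{s₂}·σz⊗σx)/2) · (φ ⊗ |s₁⟩) = (1/2) · |y_{s₃}⟩ ⊗ (σx^{s₁}·σz^{s₂}·σx^{s₃}·H·T·φ). Hence the measurement sequence Z_b, Z_a⊗X_b, ((X-Y)/√2)_a transfers the state HTφ to qubit b up to the Pauli operator σx^{s₁}σz^{s₂}σx^{s₃}, each outcome branch having squared norm ‖φ‖²/4. -/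

import Mathlib

open Matrix Complex
open scoped Real Kronecker

noncomputable section

/-- The Pauli matrix σx. -/
def σx : Matrix (Fin 2) (Fin 2) ℂ := !![0, 1; 1, 0]

/-- The Pauli matrix σy. -/
def σy : Matrix (Fin 2) (Fin 2) ℂ := !![0, -Complex.I; Complex.I, 0]

/-- The Pauli matrix σz. -/
def σz : Matrix (Fin 2) (Fin 2) ℂ := !![1, 0; 0, -1]

/-- The Hadamard gate `H = (1/√2)·!![1,1;1,-1]`. -/
def Hgate : Matrix (Fin 2) (Fin 2) ℂ :=
  ((Real.sqrt 2 : ℂ))⁻¹ • !![1, 1; 1, -1]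

/-- The T gate `T = !![1,0;0,e^{iπ/4}]`. -/
def Tgate : Matrix (Fin 2) (Fin 2) ℂ :=
  !![1, 0; 0, Complex.exp (Complex.I * (π / 4 : ℝ))]

/-- The computational basis vector `|s⟩` of ℂ². -/
def ket (s : Fin 2) : Fin 2 → ℂ := fun i => if i = s then 1 else 0

/-- The eigenvector `|y_s⟩ = (|0⟩ + (-1)^s·e^{-iπ/4}|1⟩)/√2` of the observable
`(σx - σy)/√2`, with eigenvalue `(-1)^s`. -/
def kety (s : Fin 2) : Fin 2 → ℂ := fun i =>
  if i = 0 then ((Real.sqrt 2 : ℂ))⁻¹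
  else ((-1 : ℂ) ^ (s : ℕ)) * Complex.exp (-(Complex.I * (π / 4 : ℝ))) * ((Real.sqrt 2 : ℂ))⁻¹

/-- The rank-one projector `|y_s⟩⟨y_s|`. -/
def projy (s : Fin 2) : Matrix (Fin 2) (Fin 2) ℂ :=
  Matrix.of fun i j => kety s i * (starRingEnd ℂ) (kety s j)

/-- The tensor product of two vectors of ℂ². -/
def tp (φ ψ : Fin 2 → ℂ) : Fin 2 × Fin 2 → ℂ := fun p => φ p.1 * ψ p.2

/-!
The projector for outcome `s₂` of `Z ⊗ X` sends `φ ⊗ |s₁⟩` to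
`½ (φ ⊗ |s₁⟩ + (-1)^{s₂} σz φ ⊗ σx |s₁⟩)`, and `|y_s⟩⟨y_s| ⊗ I` then leaves
`|y_s⟩ ⊗ (⟨y_s|φ⟩ |s₁⟩ + (-1)^{s₂} ⟨y_s|σz φ⟩ σx |s₁⟩)`. The two amplitudes `⟨y_s|φ⟩` and
`⟨y_s|σz φ⟩` are exactly the two components of `σx^s H T φ`, and `σx^{s₁} σz^{s₂}` puts them on
`|s₁⟩` and `σx |s₁⟩` with the sign `(-1)^{s₂}`. The norm of each branch is then `‖φ‖² / 4`
because `|y_s⟩` is a unit vector and `σx^{s₁} σz^{s₂} σx^{s₃} H T` is unitary.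
-/

lemma sum_norm_sq_eq_star_dotProduct {n : Type*} [Fintype n] (v : n → ℂ) :
    ((∑ i, ‖v i‖ ^ 2 : ℝ) : ℂ) = star v ⬝ᵥ v := by
  push_cast
  simp [dotProduct, Complex.conj_mul']

lemma sum_norm_sq_mulVec_of_mem_unitaryGroup {n : Type*} [Fintype n] [DecidableEq n]
    {U : Matrix n n ℂ} (hU : U ∈ unitaryGroup n ℂ) (v : n → ℂ) :
    ∑ i, ‖(U *ᵥ v) i‖ ^ 2 = ∑ i, ‖v i‖ ^ 2 := by
  apply Complex.ofReal_injective
  rw [sum_norm_sq_eq_star_dotProduct, sum_norm_sq_eq_star_dotProduct, star_mulVec,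
    ← dotProduct_mulVec, mulVec_mulVec, ← star_eq_conjTranspose, mem_unitaryGroup_iff'.1 hU,
    one_mulVec]

lemma tp_add (u v w : Fin 2 → ℂ) : tp u (v + w) = tp u v + tp u w := by
  ext; simp [tp, mul_add]

lemma tp_smul (c : ℂ) (u v : Fin 2 → ℂ) : tp u (c • v) = c • tp u v := by
  ext; simp [tp, mul_left_comm]

lemma smul_tp (c : ℂ) (u v : Fin 2 → ℂ) : tp (c • u) v = tp u (c • v) := by
  ext; simp [tp, mul_assoc, mul_left_comm]

lemma kronecker_mulVec_tp (A B : Matrix (Fin 2) (Fin 2) ℂ) (u v : Fin 2 → ℂ) :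
    (A ⊗ₖ B) *ᵥ tp u v = tp (A *ᵥ u) (B *ᵥ v) := by
  ext ⟨i, j⟩
  simp only [mulVec, dotProduct, tp, kroneckerMap_apply, Fintype.sum_prod_type,
    Finset.sum_mul_sum]
  exact Finset.sum_congr rfl fun _ _ => Finset.sum_congr rfl fun _ _ => by ring

lemma sum_norm_sq_tp (u v : Fin 2 → ℂ) :
    ∑ p : Fin 2 × Fin 2, ‖tp u v p‖ ^ 2 = (∑ i, ‖u i‖ ^ 2) * ∑ j, ‖v j‖ ^ 2 := by
  simp only [tp, norm_mul, mul_pow, Fintype.sum_prod_type, Finset.sum_mul_sum]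

lemma projy_eq_vecMulVec (s : Fin 2) : projy s = vecMulVec (kety s) (star (kety s)) := rfl

lemma projy_mulVec (s : Fin 2) (u : Fin 2 → ℂ) :
    projy s *ᵥ u = (star (kety s) ⬝ᵥ u) • kety s := by
  rw [projy_eq_vecMulVec, vecMulVec_mulVec, op_smul_eq_smul]

lemma projy_kronecker_one_mulVec_tp (s : Fin 2) (u v : Fin 2 → ℂ) :
    (projy s ⊗ₖ (1 : Matrix (Fin 2) (Fin 2) ℂ)) *ᵥ tp u v
      = tp (kety s) ((star (kety s) ⬝ᵥ u) • v) := by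
  rw [kronecker_mulVec_tp, projy_mulVec, one_mulVec, smul_tp]

lemma star_kety (s : Fin 2) :
    star (kety s) = ![(Real.sqrt 2 : ℂ)⁻¹,
      (-1 : ℂ) ^ (s : ℕ) * Complex.exp (Complex.I * (π / 4 : ℝ)) * (Real.sqrt 2 : ℂ)⁻¹] := by
  have hconj : star (Complex.exp (-(Complex.I * (π / 4 : ℝ))))
      = Complex.exp (Complex.I * (π / 4 : ℝ)) := by
    rw [Complex.star_def, ← Complex.exp_conj, map_neg, map_mul, Complex.conj_I,
      Complex.conj_ofReal, neg_mul, neg_neg]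
  ext i
  fin_cases i <;> simp [kety, hconj, Complex.conj_ofReal, -Complex.ofReal_div]

lemma sum_norm_sq_kety (s : Fin 2) : ∑ i, ‖kety s i‖ ^ 2 = 1 := by
  norm_num [kety, Fin.sum_univ_two, Complex.norm_exp]

lemma star_kety_dotProduct (s : Fin 2) (φ : Fin 2 → ℂ) :
    star (kety s) ⬝ᵥ φ = ((σx ^ (s : ℕ) * Hgate * Tgate) *ᵥ φ) 0 ∧
    star (kety s) ⬝ᵥ (σz *ᵥ φ) = ((σx ^ (s : ℕ) * Hgate * Tgate) *ᵥ φ) 1 := by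
  rw [star_kety]
  fin_cases s <;>
  simp [dotProduct, σx, σz, Hgate, Tgate, mulVec, Fin.sum_univ_two, Matrix.mul_apply, mul_comm]

lemma σx_pow_mul_σz_pow_mulVec (s₁ s₂ : Fin 2) (w : Fin 2 → ℂ) :
    (σx ^ (s₁ : ℕ) * σz ^ (s₂ : ℕ)) *ᵥ w
      = w 0 • ket s₁ + ((-1 : ℂ) ^ (s₂ : ℕ) * w 1) • (σx *ᵥ ket s₁) := by
  ext i
  fin_cases s₁ <;> fin_cases s₂ <;> fin_cases i <;>
    simp [σx, σz, ket, mulVec, dotProduct, Fin.sum_univ_two]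

lemma zx_projector_mulVec_tp (c : ℂ) (φ ψ : Fin 2 → ℂ) :
    ((2 : ℂ)⁻¹ • ((1 : Matrix (Fin 2 × Fin 2) (Fin 2 × Fin 2) ℂ) + c • (σz ⊗ₖ σx))) *ᵥ tp φ ψ
      = (2 : ℂ)⁻¹ • (tp φ ψ + c • tp (σz *ᵥ φ) (σx *ᵥ ψ)) := by
  rw [smul_mulVec, add_mulVec, one_mulVec, smul_mulVec, kronecker_mulVec_tp]

lemma σx_mem_unitaryGroup : σx ∈ unitaryGroup (Fin 2) ℂ := by
  rw [mem_unitaryGroup_iff']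
  ext i j; fin_cases i <;> fin_cases j <;> simp [σx, Matrix.mul_apply, Fin.sum_univ_two]

lemma σz_mem_unitaryGroup : σz ∈ unitaryGroup (Fin 2) ℂ := by
  rw [mem_unitaryGroup_iff']
  ext i j; fin_cases i <;> fin_cases j <;> simp [σz, Matrix.mul_apply, Fin.sum_univ_two]

lemma Hgate_mem_unitaryGroup : Hgate ∈ unitaryGroup (Fin 2) ℂ := by
  rw [mem_unitaryGroup_iff']
  ext i j
  fin_cases i <;> fin_cases j <;>
    norm_num [Hgate, Matrix.mul_apply, Fin.sum_univ_two, ← mul_inv, ← Complex.ofReal_mul]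

lemma Tgate_mem_unitaryGroup : Tgate ∈ unitaryGroup (Fin 2) ℂ := by
  rw [mem_unitaryGroup_iff']
  ext i j
  fin_cases i <;> fin_cases j <;>
    simp [Tgate, Matrix.mul_apply, Fin.sum_univ_two, Complex.conj_mul', Complex.norm_exp]

lemma pauli_mul_HT_mem_unitaryGroup (s₁ s₂ s₃ : Fin 2) :
    σx ^ (s₁ : ℕ) * σz ^ (s₂ : ℕ) * σx ^ (s₃ : ℕ) * Hgate * Tgate ∈ unitaryGroup (Fin 2) ℂ :=
  mul_mem (mul_mem (mul_mem (mul_mem (pow_mem σx_mem_unitaryGroup _)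
    (pow_mem σz_mem_unitaryGroup _)) (pow_mem σx_mem_unitaryGroup _)) Hgate_mem_unitaryGroup)
    Tgate_mem_unitaryGroup

/-- Simulation of `HT` up to a Pauli operator by state transfer with observables
`Z`, `Z⊗X`, `(X-Y)/√2`: applying the projectors for outcomes `s₂` (observable `σz⊗σx`)
and `s₃` (observable `(σx-σy)/√2` on the data qubit `a`) to `φ ⊗ |s₁⟩` yields
`(1/2)·|y_{s₃}⟩ ⊗ (σx^{s₁}·σz^{s₂}·σx^{s₃}·H·T·φ)`; every branch has squared
norm `‖φ‖²/4`. -/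
theorem HT_state_transfer (s₁ s₂ s₃ : Fin 2) (φ : Fin 2 → ℂ) :
    ((projy s₃ ⊗ₖ (1 : Matrix (Fin 2) (Fin 2) ℂ)).mulVec
      (((2 : ℂ)⁻¹ • ((1 : Matrix (Fin 2 × Fin 2) (Fin 2 × Fin 2) ℂ)
          + ((-1 : ℂ) ^ (s₂ : ℕ)) • (σz ⊗ₖ σx))).mulVec
        (tp φ (ket s₁)))
      = (2 : ℂ)⁻¹ •
          tp (kety s₃)
            ((σx ^ (s₁ : ℕ) * σz ^ (s₂ : ℕ) * σx ^ (s₃ : ℕ) * Hgate * Tgate).mulVec φ)) ∧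
    (∑ p : Fin 2 × Fin 2,
        ‖((2 : ℂ)⁻¹ •
          tp (kety s₃)
            ((σx ^ (s₁ : ℕ) * σz ^ (s₂ : ℕ) * σx ^ (s₃ : ℕ) * Hgate * Tgate).mulVec φ)) p‖ ^ 2
      = (∑ i : Fin 2, ‖φ i‖ ^ 2) / 4) := by
  constructor
  · obtain ⟨h₀, h₁⟩ := star_kety_dotProduct s₃ φ
    have hU : σx ^ (s₁ : ℕ) * σz ^ (s₂ : ℕ) * σx ^ (s₃ : ℕ) * Hgate * Tgate
        = (σx ^ (s₁ : ℕ) * σz ^ (s₂ : ℕ)) * (σx ^ (s₃ : ℕ) * Hgate * Tgate) := by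
      simp only [Matrix.mul_assoc]
    rw [zx_projector_mulVec_tp, mulVec_smul, mulVec_add, mulVec_smul,
      projy_kronecker_one_mulVec_tp, projy_kronecker_one_mulVec_tp, ← tp_smul, ← tp_add, hU,
      ← mulVec_mulVec, σx_pow_mul_σz_pow_mulVec, h₀, h₁, smul_smul]
  · rw [← tp_smul, sum_norm_sq_tp, sum_norm_sq_kety, one_mul]
    simp only [Pi.smul_apply, smul_eq_mul, norm_mul, mul_pow, ← Finset.mul_sum,
      sum_norm_sq_mulVec_of_mem_unitaryGroup (pauli_mul_HT_mem_unitaryGroup _ _ _)]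
    norm_num [div_eq_inv_mul]
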